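/- Let C be a dagger category and f : A ⟶ B a morphism. The cospan consisting of f : A ⟶ B and 𝟙_B : B ⟶ B has a dagger pullback (a dagger limit of the cospan diagram with Ω consisting of the two feet A and B) if and only if f is a partial isometry. Consequently, if a dagger category has all dagger pullbacks, then every morphism in it is a partial isometry. -/

import Mathlib

open CategoryTheory

universe v u v₁ u₁ v₂ u₂

class DaggerCategory (C : Type u) [Category.{v} C] where
  dag : ∀ {A B : C}, (A ⟶ B) → (B ⟶ A)
  dag_id : ∀ (A : C), dag (𝟙 A) = 𝟙 A
  dag_comp : ∀ {A B X : C} (f : A ⟶ B) (g : B ⟶ X), dag (f ≫ g) = dag g ≫ dag f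
  dag_dag : ∀ {A B : C} (f : A ⟶ B), dag (dag f) = f

postfix:max "†" => DaggerCategory.dag

section Defs

variable {C : Type u} [Category.{v} C] [DaggerCategory C]

/-- A morphism `f` is a partial isometry if `f ∘ f† ∘ f = f`. -/
def IsPartialIsometry {A B : C} (f : A ⟶ B) : Prop :=
  f ≫ f† ≫ f = f

/-- A morphism `f : A ⟶ B` is unitary if `f† ∘ f = 𝟙 A` and `f ∘ f† = 𝟙 B`. -/
def IsUnitary {A B : C} (f : A ⟶ B) : Prop :=
  f ≫ f† = 𝟙 A ∧ f† ≫ f = 𝟙 B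

/-- A morphism `f` is dagger monic (an isometry) if `f† ∘ f = 𝟙`. -/
def DaggerMonic {A B : C} (f : A ⟶ B) : Prop :=
  f ≫ f† = 𝟙 A

/-- `(L, l)` is a limit cone over the diagram `D`. -/
def IsLimitCone {J : Type u₁} [Category.{v₁} J] (D : J ⥤ C) (L : C)
    (l : ∀ j : J, L ⟶ D.obj j) : Prop :=
  (∀ {j j' : J} (f : j ⟶ j'), l j ≫ D.map f = l j') ∧
  (∀ (M : C) (m : ∀ j : J, M ⟶ D.obj j),
    (∀ {j j' : J} (f : j ⟶ j'), m j ≫ D.map f = m j') →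
    ∃! g : M ⟶ L, ∀ j : J, g ≫ l j = m j)

/-- A class of objects `Ω` is weakly initial when every object admits a morphism
from some member of `Ω`. -/
def WeaklyInitial {J : Type u₁} [Category.{v₁} J] (Ω : Set J) : Prop :=
  ∀ B : J, ∃ A ∈ Ω, Nonempty (A ⟶ B)

/-- `(L, l)` is a dagger limit of `(D, Ω)`: a limit cone whose legs at `Ω` are
partial isometries with pairwise commuting induced projections. -/
def IsDaggerLimit {J : Type u₁} [Category.{v₁} J] (D : J ⥤ C) (Ω : Set J) (L : C)
    (l : ∀ j : J, L ⟶ D.obj j) : Prop :=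
  IsLimitCone D L l ∧
  (∀ j ∈ Ω, IsPartialIsometry (l j)) ∧
  (∀ j ∈ Ω, ∀ j' ∈ Ω,
    (l j ≫ (l j)†) ≫ (l j' ≫ (l j')†) = (l j' ≫ (l j')†) ≫ (l j ≫ (l j)†))

end Defs

/-!
Up to isomorphism the pullback of `f : A ⟶ B` along `𝟙 B` is `A` itself, with legs `𝟙 A` and `f`.
If `f` is a partial isometry these legs form a dagger limit. Conversely, in any dagger pullback
`(P, l)` the leg `l left` is the comparison isomorphism with that cone; being also a partial
isometry it is unitary. Precomposition with a unitary preserves and reflects partial isometries,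
so `f` inherits the property from the partial isometry `l right = l left ≫ f`.
-/

open CategoryTheory.Limits DaggerCategory

section Limits

variable {C : Type u} [Category.{v} C]

theorem IsLimitCone.isIso_of_fac {J : Type u₁} [Category.{v₁} J] {D : J ⥤ C} {L L' : C}
    {l : ∀ j, L ⟶ D.obj j} {l' : ∀ j, L' ⟶ D.obj j}
    (hl : IsLimitCone D L l) (hl' : IsLimitCone D L' l') (g : L ⟶ L')
    (hg : ∀ j, g ≫ l' j = l j) : IsIso g := by
  obtain ⟨h, hh, -⟩ := hl.2 L' l' hl'.1
  obtain ⟨_, -, hl_unique⟩ := hl.2 L l hl.1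
  obtain ⟨_, -, hl'_unique⟩ := hl'.2 L' l' hl'.1
  refine ⟨h, ?_, ?_⟩
  · exact (hl_unique _ fun j => by rw [Category.assoc, hh, hg]).trans
      (hl_unique _ fun j => Category.id_comp _).symm
  · exact (hl'_unique _ fun j => by rw [Category.assoc, hg, hh]).trans
      (hl'_unique _ fun j => Category.id_comp _).symm

def cospanIdLegs {A B : C} (f : A ⟶ B) : ∀ j, A ⟶ (cospan f (𝟙 B)).obj j
  | .left => 𝟙 A
  | .right => f
  | .one => f

theorem isLimitCone_cospan_id {A B : C} (f : A ⟶ B) :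
    IsLimitCone (cospan f (𝟙 B)) A (cospanIdLegs f) := by
  refine ⟨?_, fun M m hm => ⟨m .left, ?_, ?_⟩⟩
  · rintro j j' (_ | ⟨⟨⟩⟩) <;> simp [cospanIdLegs]
  · have hleft : m .left ≫ f = m .one := hm WalkingCospan.Hom.inl
    have hright : m .right = m .one := (Category.comp_id _).symm.trans (hm WalkingCospan.Hom.inr)
    intro j
    match j with
    | .left => exact Category.comp_id _
    | .right => exact hleft.trans hright.symm
    | .one => exact hleft
  · intro g hg
    simpa [cospanIdLegs] using hg .left

end Limits

section Dagger

variable {C : Type u} [Category.{v} C] [DaggerCategory C]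

theorem IsPartialIsometry.isUnitary_of_isIso {A B : C} {u : A ⟶ B} [IsIso u]
    (hu : IsPartialIsometry u) : IsUnitary u := by
  refine ⟨(cancel_mono u).mp ?_, (cancel_epi u).mp ?_⟩
  · rw [Category.assoc, hu, Category.id_comp]
  · rw [hu, Category.comp_id]

theorem IsUnitary.isPartialIsometry_comp_iff {P A B : C} {u : P ⟶ A} (hu : IsUnitary u)
    (f : A ⟶ B) : IsPartialIsometry (u ≫ f) ↔ IsPartialIsometry f := by
  have hexpand : (u ≫ f) ≫ (u ≫ f)† ≫ u ≫ f = u ≫ f ≫ f† ≫ f := by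
    simp only [dag_comp, Category.assoc, reassoc_of% hu.2]
  have hcancel : ∀ x y : A ⟶ B, u ≫ x = u ≫ y ↔ x = y := fun x y =>
    ⟨fun h => by simpa [reassoc_of% hu.2] using congrArg (u† ≫ ·) h, fun h => h ▸ rfl⟩
  rw [IsPartialIsometry, IsPartialIsometry, hexpand, hcancel]

theorem isDaggerLimit_cospan_id {A B : C} {f : A ⟶ B} (hf : IsPartialIsometry f) :
    IsDaggerLimit (cospan f (𝟙 B)) {WalkingCospan.left, WalkingCospan.right} A
      (cospanIdLegs f) := by
  refine ⟨isLimitCone_cospan_id f, ?_, ?_⟩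
  · rintro j (rfl | rfl)
    · simp [cospanIdLegs, IsPartialIsometry, dag_id]
    · exact hf
  · rintro j (rfl | rfl) j' (rfl | rfl) <;> simp [cospanIdLegs, dag_id]

theorem IsDaggerLimit.isPartialIsometry_of_cospan_id {A B P : C} {f : A ⟶ B}
    {l : ∀ j, P ⟶ (cospan f (𝟙 B)).obj j}
    (hl : IsDaggerLimit (cospan f (𝟙 B)) {WalkingCospan.left, WalkingCospan.right} P l) :
    IsPartialIsometry f := by
  obtain ⟨hlim, hpi, -⟩ := hl
  have hleft : l .left ≫ f = l .one := hlim.1 WalkingCospan.Hom.inl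
  have hright : l .right = l .left ≫ f :=
    ((Category.comp_id _).symm.trans (hlim.1 WalkingCospan.Hom.inr)).trans hleft.symm
  have : IsIso (l .left) := hlim.isIso_of_fac (isLimitCone_cospan_id f) (l .left) fun j =>
    match j with
    | .left => Category.comp_id _
    | .right => hright.symm
    | .one => hleft
  have hunitary : IsUnitary (l .left) := (hpi .left (by simp)).isUnitary_of_isIso
  exact (hunitary.isPartialIsometry_comp_iff f).mp (hright ▸ hpi .right (by simp))

theorem exists_isDaggerLimit_cospan_id_iff {A B : C} (f : A ⟶ B) :
    (∃ (P : C) (l : ∀ j : WalkingCospan, P ⟶ (cospan f (𝟙 B)).obj j),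
        IsDaggerLimit (cospan f (𝟙 B)) {WalkingCospan.left, WalkingCospan.right} P l) ↔
      IsPartialIsometry f :=
  ⟨fun ⟨_, _, hl⟩ => hl.isPartialIsometry_of_cospan_id,
    fun hf => ⟨A, cospanIdLegs f, isDaggerLimit_cospan_id hf⟩⟩

end Dagger

open CategoryTheory.Limits in
theorem daggerPullback_along_id_iff_partialIsometry :
    (∀ {C : Type u} [Category.{v} C] [DaggerCategory C] {A B : C} (f : A ⟶ B),
      (∃ (P : C) (l : ∀ j : WalkingCospan, P ⟶ (cospan f (𝟙 B)).obj j),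
        IsDaggerLimit (cospan f (𝟙 B))
          {WalkingCospan.left, WalkingCospan.right} P l) ↔
      IsPartialIsometry f) ∧
    (∀ {C : Type u} [Category.{v} C] [DaggerCategory C],
      (∀ {A B X : C} (f : A ⟶ X) (g : B ⟶ X),
        ∃ (P : C) (l : ∀ j : WalkingCospan, P ⟶ (cospan f g).obj j),
          IsDaggerLimit (cospan f g)
            {WalkingCospan.left, WalkingCospan.right} P l) →
      ∀ {A B : C} (f : A ⟶ B), IsPartialIsometry f) := by
  refine ⟨fun f => exists_isDaggerLimit_cospan_id_iff f, ?_⟩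
  intro C _ _ hall A B f
  exact (exists_isDaggerLimit_cospan_id_iff f).mp (hall f (𝟙 _))
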